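/- arXiv:1911.08741 — 2 statements merged into one kernel-verified Lean document; each statement's English description precedes it below -/
import Mathlib

section
/- Let X be a nonempty proper, noncompact geodesic metric space and x0 ∈ X. The set P_{x0} = { x ∈ X : there exists c ∈ ℝ with u_x(z) = u_{x0}(z) + c for all z ∈ X } is a closed subset of X. -/
open Metric Filter

/-- A metric space is geodesic if every pair of points is joined by a unit-speed
minimizing geodesic segment. -/
def IsGeodesicSpace (X : Type*) [MetricSpace X] : Prop :=
  ∀ x y : X, ∃ γ : ℝ → X, γ 0 = x ∧ γ (dist x y) = y ∧
    ∀ s ∈ Set.Icc (0 : ℝ) (dist x y), ∀ t ∈ Set.Icc (0 : ℝ) (dist x y),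
      dist (γ s) (γ t) = |s - t|

lemma exists_far {X : Type*} [MetricSpace X] [ProperSpace X] [NoncompactSpace X]
    (x : X) (r : ℝ) : ∃ p : X, r ≤ dist x p := by
  by_contra h
  push_neg at h
  have : Bornology.IsBounded (Set.univ : Set X) := by
    rw [Metric.isBounded_iff_subset_closedBall x]
    exact ⟨r, fun p _ => Metric.mem_closedBall.mpr (le_of_lt (by rw [dist_comm]; exact h p))⟩
  exact (not_compactSpace_iff.mpr ‹NoncompactSpace X›)
    (Metric.compactSpace_iff_isBounded_univ.mpr this)

lemma sphere_ne {X : Type*} [MetricSpace X] [ProperSpace X] [NoncompactSpace X]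
    (hgeo : IsGeodesicSpace X) (x : X) {r : ℝ} (hr : 0 ≤ r) :
    (sphere x r).Nonempty := by
  obtain ⟨p, hp⟩ := exists_far x r
  obtain ⟨γ, h0, _, hγ⟩ := hgeo x p
  refine ⟨γ r, ?_⟩
  have h1 := hγ 0 ⟨le_refl _, dist_nonneg⟩ r ⟨hr, hp⟩
  rw [h0] at h1
  show dist (γ r) x = r
  rw [dist_comm, h1, abs_of_nonpos (by linarith)]; ring

lemma key_est {X : Type*} [MetricSpace X] [ProperSpace X] [NoncompactSpace X]
    (hgeo : IsGeodesicSpace X) (x y z : X) {r : ℝ} (hr : 0 ≤ r) :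
    infDist z (sphere x r) ≤ infDist z (sphere y (r + dist x y)) + 2 * dist x y := by
  set d := dist x y with hd
  have hd0 : 0 ≤ d := dist_nonneg
  have hne : (sphere y (r + d)).Nonempty := sphere_ne hgeo y (by linarith)
  have : infDist z (sphere x r) - 2 * d ≤ infDist z (sphere y (r + d)) := by
    by_contra hlt
    push_neg at hlt
    obtain ⟨w, hw, hwlt⟩ := (infDist_lt_iff hne).1 hlt
    refine absurd hwlt (not_lt.2 ?_)
    have hw' : dist y w = r + d := by rw [dist_comm]; exact hw
    have hxw : r ≤ dist x w := by
      have := dist_triangle y x w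
      rw [dist_comm y x] at this
      linarith
    obtain ⟨γ, h0, hend, hγ⟩ := hgeo x w
    have hmem : γ r ∈ sphere x r := by
      have := hγ 0 ⟨le_refl _, dist_nonneg⟩ r ⟨hr, hxw⟩
      rw [h0] at this
      simp only [mem_sphere]
      rw [dist_comm]
      rw [this, abs_of_nonpos (by linarith)]; ring
    have hvw : dist (γ r) w = dist x w - r := by
      have := hγ r ⟨hr, hxw⟩ (dist x w) ⟨dist_nonneg, le_refl _⟩
      rw [hend] at this
      rw [this, abs_of_nonpos (by linarith)]; ring
    have hxw' : dist x w ≤ r + 2 * d := by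
      have := dist_triangle x y w
      rw [hw'] at this; linarith
    have h1 : infDist z (sphere x r) ≤ dist z (γ r) := infDist_le_dist_of_mem hmem
    have h2 : dist z (γ r) ≤ dist z w + dist w (γ r) := dist_triangle _ _ _
    rw [dist_comm w (γ r), hvw] at h2
    linarith
  linarith

lemma u_lip {X : Type*} [MetricSpace X] [ProperSpace X] [NoncompactSpace X]
    (hgeo : IsGeodesicSpace X) (u : X → X → ℝ)
    (hu : ∀ x0 x : X,
      Tendsto (fun r : ℝ => infDist x (sphere x0 r) - r) atTop (nhds (u x0 x)))
    (x y z : X) : u x z ≤ u y z + 3 * dist x y := by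
  have h1 : Tendsto (fun r : ℝ => infDist z (sphere x r) - r) atTop (nhds (u x z)) := hu x z
  have h3 : Tendsto (fun r : ℝ => infDist z (sphere y (r + dist x y)) - (r + dist x y))
      atTop (nhds (u y z)) :=
    (hu y z).comp (tendsto_atTop_add_const_right atTop (dist x y) tendsto_id)
  have h2 := h3.add_const (3 * dist x y)
  refine le_of_tendsto_of_tendsto h1 h2 ?_
  filter_upwards [eventually_ge_atTop (0 : ℝ)] with r hr
  have := key_est hgeo x y z hr (X := X)
  show infDist z (sphere x r) - r ≤ infDist z (sphere y (r + dist x y)) - (r + dist x y) + 3 * dist x y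
  linarith

/-- the equivalence class
`P_{x0} = { x : ∃ c, u_x = u_{x0} + c }` is closed in `X`. -/
theorem stmt7 {X : Type*} [MetricSpace X] [Nonempty X] [ProperSpace X] [NoncompactSpace X]
    (hgeo : IsGeodesicSpace X)
    (u : X → X → ℝ)
    (hu : ∀ x0 x : X,
      Tendsto (fun r : ℝ => infDist x (sphere x0 r) - r) atTop (nhds (u x0 x)))
    (x0 : X) :
    IsClosed {x : X | ∃ c : ℝ, ∀ z : X, u x z = u x0 z + c} := by
  have hcont : ∀ z : X, Continuous (fun x => u x z) := by
    intro z
    refine (LipschitzWith.of_dist_le_mul (K := 3) (f := fun x => u x z) ?_).continuous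
    intro a b
    rw [Real.dist_eq]
    have h1 := u_lip hgeo u hu a b z
    have h2 := u_lip hgeo u hu b a z
    rw [dist_comm b a] at h2
    rw [abs_le]
    push_cast
    constructor <;> linarith
  have hset : {x : X | ∃ c : ℝ, ∀ z : X, u x z = u x0 z + c}
      = ⋂ z : X, {x : X | u x z - u x x0 = u x0 z - u x0 x0} := by
    ext x
    simp only [Set.mem_setOf_eq, Set.mem_iInter]
    constructor
    · rintro ⟨c, hc⟩ z
      rw [hc z, hc x0]; ring
    · intro h
      refine ⟨u x x0 - u x0 x0, fun z => ?_⟩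
      have := h z
      linarith
  rw [hset]
  refine isClosed_iInter fun z => ?_
  exact isClosed_eq (((hcont z).sub (hcont x0))) continuous_const
end

section
/- Let X be a nonempty proper, noncompact geodesic metric space, define ρ(x,y) = −(u_x(y) + u_y(x))/2, and fix z0 ∈ X. Then for all x, x', z ∈ X, |(u_x(z) − u_x(z0)) − (u_{x'}(z) − u_{x'}(z0))| ≤ 2·ρ(x, x'); that is, the map x ↦ u_x(·) − u_x(z0) is 2-Lipschitz from (X, ρ) into continuous functions on X with the sup-metric. -/
open Metric Filter

/-- In a noncompact proper geodesic space, all spheres of nonnegative radius are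
nonempty. -/
lemma sphere_nonempty_aux {X : Type*} [MetricSpace X] [ProperSpace X] [NoncompactSpace X]
    (hgeo : IsGeodesicSpace X) (x0 : X) (t : ℝ) (ht : 0 ≤ t) :
    (sphere x0 t).Nonempty := by
  -- the space is unbounded
  obtain ⟨y, hy⟩ : ∃ y : X, t ≤ dist x0 y := by
    by_contra h
    push_neg at h
    have huniv : (Set.univ : Set X) ⊆ closedBall x0 t := fun y _ => by simp only [mem_closedBall]; rw [dist_comm]; exact (h y).le
    exact noncompact_univ X ((isCompact_closedBall x0 t).of_isClosed_subset isClosed_univ huniv)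
  obtain ⟨γ, hγ0, hγ1, hγ⟩ := hgeo x0 y
  refine ⟨γ t, ?_⟩
  have := hγ 0 ⟨le_refl 0, dist_nonneg⟩ t ⟨ht, hy⟩
  rw [hγ0] at this
  simp only [mem_sphere]
  rw [dist_comm, this, abs_of_nonpos (by linarith)]
  ring

/-- Key inequality: `u_x(z) + u_{x'}(x) ≤ u_{x'}(z)`. -/
lemma keyA {X : Type*} [MetricSpace X] [ProperSpace X] [NoncompactSpace X]
    (hgeo : IsGeodesicSpace X) (u : X → X → ℝ)
    (hu : ∀ x0 x : X,
      Tendsto (fun r : ℝ => infDist x (sphere x0 r) - r) atTop (nhds (u x0 x)))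
    (x x' z : X) : u x z + u x' x ≤ u x' z := by
  have hA := hu x z
  have hB := hu x' x
  have hC := hu x' z
  -- it suffices to show the inequality for the approximants in r
  refine le_of_tendsto (hA.add_const (u x' x)) ?_
  filter_upwards [eventually_ge_atTop (max (dist x z) 0)] with r hr
  have hr0 : (0 : ℝ) ≤ r := le_trans (le_max_right _ _) hr
  have hrxz : dist x z ≤ r := le_trans (le_max_left _ _) hr
  -- now show (infDist z (sphere x r) - r) + u x' x ≤ u x' z via t → ∞
  refine le_of_tendsto_of_tendsto
    (f := fun t : ℝ => (infDist z (sphere x r) - r) + (infDist x (sphere x' t) - t))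
    (g := fun t : ℝ => infDist z (sphere x' t) - t) (hB.const_add _) hC ?_
  simp only [Filter.EventuallyLE]
  filter_upwards [eventually_ge_atTop (max (r + dist x x') 0)] with t htt
  have ht0 : (0 : ℝ) ≤ t := le_trans (le_max_right _ _) htt
  have htr : r + dist x x' ≤ t := le_trans (le_max_left _ _) htt
  -- core inequality via a minimizing point on the sphere around x'
  obtain ⟨w, hw, hwd⟩ := (isClosed_sphere).exists_infDist_eq_dist
    (sphere_nonempty_aux hgeo x' t ht0) z
  rw [mem_sphere] at hw
  -- find a point p on a geodesic from z to w with dist x p = r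
  obtain ⟨γ, hγ0, hγ1, hγ⟩ := hgeo z w
  set L := dist z w with hL
  have hL0 : (0 : ℝ) ≤ L := dist_nonneg
  have hxw : r ≤ dist x w := by
    have : dist x' w ≤ dist x' x + dist x w := dist_triangle x' x w
    have hxw' : dist x' w = t := by rw [dist_comm]; exact hw
    rw [dist_comm x' x] at this
    linarith [this, hxw' ▸ this]
  have hcont : ContinuousOn (fun s => dist x (γ s)) (Set.Icc 0 L) := by
    refine (LipschitzOnWith.of_dist_le' (K := 1) ?_).continuousOn
    intro a ha b hb
    rw [one_mul, Real.dist_eq]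
    calc dist (dist x (γ a)) (dist x (γ b)) = |dist (γ a) x - dist (γ b) x| := by
          rw [Real.dist_eq, dist_comm x (γ a), dist_comm x (γ b)]
      _ ≤ dist (γ a) (γ b) := abs_dist_sub_le _ _ _
      _ = |a - b| := hγ a ha b hb
  have hmem : r ∈ Set.Icc (dist x (γ 0)) (dist x (γ L)) := by
    rw [hγ0, hγ1]
    exact ⟨hrxz, hxw⟩
  obtain ⟨s, hs, hps⟩ := intermediate_value_Icc hL0 hcont hmem
  simp only at hps
  -- distances along the geodesic
  have hzp : dist z (γ s) = s := by
    have := hγ 0 ⟨le_refl 0, hL0⟩ s hs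
    rw [hγ0] at this
    rw [this, abs_of_nonpos (by linarith [hs.1])]
    ring
  have hpw : dist (γ s) w = L - s := by
    have := hγ s hs L ⟨hL0, le_refl L⟩
    rw [hγ1] at this
    rw [this, abs_of_nonpos (by linarith [hs.2])]
    ring
  have hp_sphere : γ s ∈ sphere x r := by
    rw [mem_sphere, dist_comm]; exact hps
  have h1 : infDist z (sphere x r) ≤ s := by
    have := infDist_le_dist_of_mem (x := z) hp_sphere
    rwa [hzp] at this
  have h2 : infDist x (sphere x' t) ≤ r + (L - s) := by
    calc infDist x (sphere x' t) ≤ dist x w := infDist_le_dist_of_mem (by rwa [mem_sphere])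
      _ ≤ dist x (γ s) + dist (γ s) w := dist_triangle _ _ _
      _ = r + (L - s) := by rw [hps, hpw]
  -- conclude
  have : infDist z (sphere x r) + infDist x (sphere x' t) ≤ r + L := by linarith
  rw [hwd]
  linarith

/-- with `ρ(x,x') = −(u_x(x')+u_{x'}(x))/2`, the normalized map
`x ↦ u_x(·) − u_x(z0)` is 2-Lipschitz from `(X,ρ)` into `(C(X,ℝ), d_∞)`. -/
theorem stmt8 {X : Type*} [MetricSpace X] [Nonempty X] [ProperSpace X] [NoncompactSpace X]
    (hgeo : IsGeodesicSpace X)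
    (u : X → X → ℝ)
    (hu : ∀ x0 x : X,
      Tendsto (fun r : ℝ => infDist x (sphere x0 r) - r) atTop (nhds (u x0 x)))
    (ρ : X → X → ℝ) (hρ : ∀ x y : X, ρ x y = -(u x y + u y x) / 2)
    (z0 : X) :
    ∀ x x' z : X, |(u x z - u x z0) - (u x' z - u x' z0)| ≤ 2 * ρ x x' := by
  intro x x' z
  have h1 := keyA hgeo u hu x x' z
  have h2 := keyA hgeo u hu x' x z
  have h3 := keyA hgeo u hu x x' z0
  have h4 := keyA hgeo u hu x' x z0
  rw [hρ, abs_le]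
  constructor <;> linarith
end
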